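/- For the single-qubit Z-rotation channel U(ρ) = e^{−iθZ/2} ρ e^{iθZ/2} with 0 ≤ θ ≤ π/4, the maximal Choi-state fidelity with completely stabilizer-preserving channels is at most (1+cosθ)/2: max over two-qubit stabilizer states σ of tr[Π_0 ρ_L(θ) Π_0 · Π_0 σ Π_0 / tr(Π_0σΠ_0)] ≤ max over single-qubit stabilizer states σ' of tr[ρ(θ) σ'] = (1+cosθ)/2, where ρ(θ) = (1/2)(I + cosθ X + sinθ Y). -/

import Mathlib

/-!
The projector `Pi0` cuts out the code space span{|00⟩, |11⟩}, on which `XX` and `YX` (equal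
there to `XY`) act as the logical `X` and `Y`; there `Pi0 * rhoL θ * Pi0` is `ρ(θ)`. For a pure
stabilizer state `τ` generated by commuting signed Pauli strings `g₁, g₂`, the expectation
`tr (P τ)` of a Pauli string is `±1` when `±P` lies in the stabilizer group `{1, g₁, g₂, g₁ g₂}`
and `0` otherwise. A finite check over all generator pairs then shows that the logical Bloch
coordinates `x, y` of `Pi0 * τ * Pi0` and its trace `t` satisfy `|x| + |y| ≤ t`, a convex
condition that passes to mixtures of stabilizer states. Since `0 ≤ sin θ ≤ cos θ`, this gives
`cos θ * x + sin θ * y ≤ cos θ * t`, which is the bound; the same inequality on the single-qubit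
octahedron shows that the maximum there is `(1 + cos θ) / 2`, attained at `(I + X) / 2`.
-/

open Matrix BigOperators Kronecker

noncomputable section

def sigmaX : Matrix (Fin 2) (Fin 2) ℂ := !![0, 1; 1, 0]
def sigmaY : Matrix (Fin 2) (Fin 2) ℂ := !![0, -Complex.I; Complex.I, 0]
def sigmaZ : Matrix (Fin 2) (Fin 2) ℂ := !![1, 0; 0, -1]

def IsStab1 (σ : Matrix (Fin 2) (Fin 2) ℂ) : Prop :=
  ∃ a b c : ℝ, |a| + |b| + |c| ≤ 1 ∧
    σ = (1/2 : ℂ) • (1 + (a : ℂ) • sigmaX + (b : ℂ) • sigmaY + (c : ℂ) • sigmaZ)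

def pauliMat : Fin 4 → Matrix (Fin 2) (Fin 2) ℂ :=
  ![1, sigmaX, sigmaY, sigmaZ]

def signedPauli2 (s : Bool) (a b : Fin 4) :
    Matrix (Fin 2 × Fin 2) (Fin 2 × Fin 2) ℂ :=
  (if s then (-1 : ℂ) else 1) • (pauliMat a ⊗ₖ pauliMat b)

def IsPureStab2 (σ : Matrix (Fin 2 × Fin 2) (Fin 2 × Fin 2) ℂ) : Prop :=
  ∃ (s₁ s₂ : Bool) (a₁ b₁ a₂ b₂ : Fin 4),
    signedPauli2 s₁ a₁ b₁ * signedPauli2 s₂ a₂ b₂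
      = signedPauli2 s₂ a₂ b₂ * signedPauli2 s₁ a₁ b₁ ∧
    σ = (1/4 : ℂ) • ((1 + signedPauli2 s₁ a₁ b₁) * (1 + signedPauli2 s₂ a₂ b₂)) ∧
    σ.trace = 1

def IsStab2 (σ : Matrix (Fin 2 × Fin 2) (Fin 2 × Fin 2) ℂ) : Prop :=
  σ ∈ convexHull ℝ {τ | IsPureStab2 τ}

def Pi0 : Matrix (Fin 2 × Fin 2) (Fin 2 × Fin 2) ℂ :=
  (1/2 : ℂ) • (1 + sigmaZ ⊗ₖ sigmaZ)

def rhoL (θ : ℝ) : Matrix (Fin 2 × Fin 2) (Fin 2 × Fin 2) ℂ :=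
  (1/2 : ℂ) • (1 + ((Real.cos θ : ℝ) : ℂ) • (sigmaX ⊗ₖ sigmaX)
    + ((Real.sin θ : ℝ) : ℂ) • (sigmaY ⊗ₖ sigmaX))

def rho1 (θ : ℝ) : Matrix (Fin 2) (Fin 2) ℂ :=
  (1/2 : ℂ) • (1 + ((Real.cos θ : ℝ) : ℂ) • sigmaX + ((Real.sin θ : ℝ) : ℂ) • sigmaY)

-- Phases live in `ℤ[i]` rather than `ℂ` so that statements about them are decidable.
def pauliProdIndex : Fin 4 → Fin 4 → Fin 4 :=
  ![![0, 1, 2, 3], ![1, 0, 3, 2], ![2, 3, 0, 1], ![3, 2, 1, 0]]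

def pauliProdPhase : Fin 4 → Fin 4 → GaussianInt :=
  ![![1, 1, 1, 1], ![1, 1, ⟨0, 1⟩, ⟨0, -1⟩], ![1, ⟨0, -1⟩, 1, ⟨0, 1⟩], ![1, ⟨0, 1⟩, ⟨0, -1⟩, 1]]

theorem pauliMat_mul_pauliMat (j k : Fin 4) :
    pauliMat j * pauliMat k = (pauliProdPhase j k : ℂ) • pauliMat (pauliProdIndex j k) := by
  fin_cases j <;> fin_cases k <;>
    simp [pauliMat, pauliProdPhase, pauliProdIndex, sigmaX, sigmaY, sigmaZ,
      GaussianInt.toComplex_def', Matrix.one_fin_two, Matrix.smul_of]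

theorem trace_pauliMat_mul_pauliMat (j k : Fin 4) :
    (pauliMat j * pauliMat k).trace = if j = k then 2 else 0 := by
  fin_cases j <;> fin_cases k <;>
    norm_num [pauliMat, sigmaX, sigmaY, sigmaZ, Matrix.one_fin_two, Matrix.trace_fin_two]

def pauliString (p : Fin 4 × Fin 4) : Matrix (Fin 2 × Fin 2) (Fin 2 × Fin 2) ℂ :=
  pauliMat p.1 ⊗ₖ pauliMat p.2

def pauliStringProdIndex (p q : Fin 4 × Fin 4) : Fin 4 × Fin 4 :=
  (pauliProdIndex p.1 q.1, pauliProdIndex p.2 q.2)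

def pauliStringProdPhase (p q : Fin 4 × Fin 4) : GaussianInt :=
  pauliProdPhase p.1 q.1 * pauliProdPhase p.2 q.2

theorem pauliString_zero : pauliString 0 = 1 :=
  one_kronecker_one

theorem pauliString_mul_pauliString (p q : Fin 4 × Fin 4) :
    pauliString p * pauliString q
      = (pauliStringProdPhase p q : ℂ) • pauliString (pauliStringProdIndex p q) := by
  rw [pauliString, pauliString, ← mul_kronecker_mul, pauliMat_mul_pauliMat, pauliMat_mul_pauliMat,
    smul_kronecker, kronecker_smul, smul_smul, pauliStringProdPhase, GaussianInt.toComplex_mul,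
    mul_comm]
  rfl

theorem pauliStringProdIndex_comm (p q : Fin 4 × Fin 4) :
    pauliStringProdIndex p q = pauliStringProdIndex q p := by
  revert p q
  decide

theorem trace_pauliString_mul_pauliString (p q : Fin 4 × Fin 4) :
    (pauliString p * pauliString q).trace = if p = q then 4 else 0 := by
  rw [pauliString, pauliString, ← mul_kronecker_mul, trace_kronecker,
    trace_pauliMat_mul_pauliMat, trace_pauliMat_mul_pauliMat]
  simp only [Prod.ext_iff]
  split_ifs <;> norm_num <;> tauto

theorem trace_pauliString_mul_smul_pauliString (q p : Fin 4 × Fin 4) (z : ℂ) :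
    (pauliString q * (z • pauliString p)).trace = if q = p then 4 * z else 0 := by
  rw [mul_smul_comm, trace_smul, trace_pauliString_mul_pauliString, smul_eq_mul]
  split_ifs <;> ring

def boolSign (s : Bool) : GaussianInt := if s then -1 else 1

theorem boolSign_ne_zero (s : Bool) : boolSign s ≠ 0 := by
  cases s <;> decide

theorem signedPauli2_eq_smul_pauliString (s : Bool) (p : Fin 4 × Fin 4) :
    signedPauli2 s p.1 p.2 = (boolSign s : ℂ) • pauliString p := by
  cases s <;> simp [signedPauli2, boolSign, pauliString]

theorem pauliStringProdPhase_comm_of_commute {s₁ s₂ : Bool} {p₁ p₂ : Fin 4 × Fin 4}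
    (h : signedPauli2 s₁ p₁.1 p₁.2 * signedPauli2 s₂ p₂.1 p₂.2
      = signedPauli2 s₂ p₂.1 p₂.2 * signedPauli2 s₁ p₁.1 p₁.2) :
    pauliStringProdPhase p₁ p₂ = pauliStringProdPhase p₂ p₁ := by
  simp only [signedPauli2_eq_smul_pauliString, smul_mul_smul_comm, pauliString_mul_pauliString,
    smul_smul, pauliStringProdIndex_comm p₂ p₁] at h
  have h' := congrArg (fun A => (pauliString (pauliStringProdIndex p₁ p₂) * A).trace) h
  simp only [trace_pauliString_mul_smul_pauliString, if_true] at h'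
  rw [← map_mul, ← map_mul, ← map_mul, ← map_mul, mul_right_inj' (by norm_num : (4 : ℂ) ≠ 0),
    GaussianInt.toComplex_inj, mul_comm (boolSign s₂)] at h'
  exact mul_left_cancel₀ (mul_ne_zero (boolSign_ne_zero s₁) (boolSign_ne_zero s₂)) h'

theorem one_add_mul_one_add_signedPauli2 (s₁ s₂ : Bool) (p₁ p₂ : Fin 4 × Fin 4) :
    (1 + signedPauli2 s₁ p₁.1 p₁.2) * (1 + signedPauli2 s₂ p₂.1 p₂.2)
      = (1 : ℂ) • pauliString 0 + (boolSign s₁ : ℂ) • pauliString p₁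
        + (boolSign s₂ : ℂ) • pauliString p₂
        + ((boolSign s₁ * boolSign s₂ * pauliStringProdPhase p₁ p₂ : GaussianInt) : ℂ)
          • pauliString (pauliStringProdIndex p₁ p₂) := by
  simp only [signedPauli2_eq_smul_pauliString, add_mul, mul_add, one_mul, mul_one,
    smul_mul_smul_comm, pauliString_mul_pauliString, smul_smul, map_mul, one_smul,
    pauliString_zero]
  abel

-- `tr (P_q τ)` for `τ = (1 + g₁) (1 + g₂) / 4`: only the stabilizer group `{1, g₁, g₂, g₁ g₂}`
-- contributes, each element through its own Pauli string.
def stabilizerExpectation (s₁ s₂ : Bool) (p₁ p₂ q : Fin 4 × Fin 4) : GaussianInt :=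
  (if q = 0 then 1 else 0) + (if q = p₁ then boolSign s₁ else 0)
    + (if q = p₂ then boolSign s₂ else 0)
    + (if q = pauliStringProdIndex p₁ p₂ then
        boolSign s₁ * boolSign s₂ * pauliStringProdPhase p₁ p₂ else 0)

theorem trace_pauliString_mul_stabilizerState (s₁ s₂ : Bool) (p₁ p₂ q : Fin 4 × Fin 4) :
    (pauliString q * ((1 / 4 : ℂ) • ((1 + signedPauli2 s₁ p₁.1 p₁.2) *
      (1 + signedPauli2 s₂ p₂.1 p₂.2)))).trace = stabilizerExpectation s₁ s₂ p₁ p₂ q := by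
  rw [one_add_mul_one_add_signedPauli2, mul_smul_comm, trace_smul]
  simp only [mul_add, trace_add, trace_pauliString_mul_smul_pauliString, stabilizerExpectation,
    map_add, apply_ite GaussianInt.toComplex, map_one, map_zero, smul_eq_mul]
  split_ifs <;> ring

theorem IsPureStab2.exists_stabilizerExpectation {τ : Matrix (Fin 2 × Fin 2) (Fin 2 × Fin 2) ℂ}
    (hτ : IsPureStab2 τ) :
    ∃ (s₁ s₂ : Bool) (p₁ p₂ : Fin 4 × Fin 4),
      pauliStringProdPhase p₁ p₂ = pauliStringProdPhase p₂ p₁ ∧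
      stabilizerExpectation s₁ s₂ p₁ p₂ 0 = 1 ∧
      ∀ q, (pauliString q * τ).trace = stabilizerExpectation s₁ s₂ p₁ p₂ q := by
  obtain ⟨s₁, s₂, a₁, b₁, a₂, b₂, hcomm, rfl, htrace⟩ := hτ
  have hexp := trace_pauliString_mul_stabilizerState s₁ s₂ (a₁, b₁) (a₂, b₂)
  refine ⟨s₁, s₂, (a₁, b₁), (a₂, b₂), pauliStringProdPhase_comm_of_commute hcomm, ?_, hexp⟩
  rw [← GaussianInt.toComplex_inj, ← hexp, pauliString_zero, one_mul, map_one]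
  exact htrace

theorem stabilizerExpectation_crossPolytope (s₁ s₂ : Bool) (p₁ p₂ : Fin 4 × Fin 4)
    (hcomm : pauliStringProdPhase p₁ p₂ = pauliStringProdPhase p₂ p₁)
    (htrace : stabilizerExpectation s₁ s₂ p₁ p₂ 0 = 1) :
    let E := stabilizerExpectation s₁ s₂ p₁ p₂
    (E (0, 0) + E (3, 3)).im = 0 ∧
      |(E (1, 1) - E (2, 2)).re| + |(E (1, 2) + E (2, 1)).re| ≤ (E (0, 0) + E (3, 3)).re := by
  revert s₁ s₂ p₁ p₂
  decide +kernel

-- Twice the logical `I`, `X`, `Y` of the qubit encoded in span{|00⟩, |11⟩}, the range of `Pi0`.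
def codeId : Matrix (Fin 2 × Fin 2) (Fin 2 × Fin 2) ℂ := pauliString (0, 0) + pauliString (3, 3)
def codeX : Matrix (Fin 2 × Fin 2) (Fin 2 × Fin 2) ℂ := pauliString (1, 1) - pauliString (2, 2)
def codeY : Matrix (Fin 2 × Fin 2) (Fin 2 × Fin 2) ℂ := pauliString (1, 2) + pauliString (2, 1)

theorem Pi0_eq : Pi0 = (1 / 2 : ℂ) • codeId := by
  rw [Pi0, codeId, ← pauliString_zero]
  rfl

theorem Pi0_mul_self : Pi0 * Pi0 = Pi0 := by
  simp only [Pi0_eq, codeId, smul_mul_smul_comm, mul_add, add_mul, pauliString_mul_pauliString]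
  simp only [pauliStringProdPhase, pauliProdPhase, pauliStringProdIndex, pauliProdIndex,
    cons_val', cons_val_zero, cons_val_fin_one, cons_val, cons_val_one, mul_one, map_one,
    one_smul]
  module

theorem Pi0_mul_rhoL_mul_Pi0 (θ : ℝ) :
    Pi0 * rhoL θ * Pi0
      = (1 / 4 : ℂ) • (codeId + (Real.cos θ : ℂ) • codeX + (Real.sin θ : ℂ) • codeY) := by
  have hrhoL : rhoL θ = (1 / 2 : ℂ) • (pauliString (0, 0)
      + (Real.cos θ : ℂ) • pauliString (1, 1) + (Real.sin θ : ℂ) • pauliString (2, 1)) := by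
    rw [rhoL, ← pauliString_zero]
    rfl
  simp only [Pi0_eq, hrhoL, codeId, codeX, codeY, mul_add, add_mul, mul_smul_comm, smul_mul_assoc,
    pauliString_mul_pauliString]
  simp only [pauliStringProdPhase, pauliProdPhase, pauliStringProdIndex, pauliProdIndex,
    cons_val', cons_val_zero, cons_val_fin_one, cons_val, cons_val_one, mul_one, map_one, map_mul,
    one_smul, smul_add, GaussianInt.toComplex_def', Int.cast_zero, Int.cast_one, Int.cast_neg,
    one_mul, zero_add, Complex.I_mul_I, neg_smul, smul_neg, neg_neg, neg_mul, mul_neg]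
  module

theorem trace_Pi0_mul_mul_Pi0 (σ : Matrix (Fin 2 × Fin 2) (Fin 2 × Fin 2) ℂ) :
    (Pi0 * σ * Pi0).trace = (codeId * σ).trace / 2 := by
  rw [trace_mul_comm, ← mul_assoc, Pi0_mul_self, Pi0_eq, smul_mul_assoc, trace_smul, smul_eq_mul]
  ring

theorem trace_Pi0_rhoL_Pi0_mul_Pi0_mul_Pi0 (θ : ℝ)
    (σ : Matrix (Fin 2 × Fin 2) (Fin 2 × Fin 2) ℂ) :
    (Pi0 * rhoL θ * Pi0 * (Pi0 * σ * Pi0)).trace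
      = ((codeId * σ).trace + Real.cos θ * (codeX * σ).trace
        + Real.sin θ * (codeY * σ).trace) / 4 := by
  have hleft : Pi0 * (Pi0 * rhoL θ * Pi0) = Pi0 * rhoL θ * Pi0 := by
    rw [← mul_assoc, ← mul_assoc, Pi0_mul_self]
  have hright : Pi0 * rhoL θ * Pi0 * Pi0 = Pi0 * rhoL θ * Pi0 := by
    rw [mul_assoc _ Pi0, Pi0_mul_self]
  rw [← mul_assoc, ← mul_assoc, hright, trace_mul_comm, ← mul_assoc, hleft, Pi0_mul_rhoL_mul_Pi0]
  simp only [smul_mul_assoc, add_mul, trace_smul, trace_add, smul_eq_mul]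
  ring

def crossPolytopeCone {n : Type*} [Fintype n] (T X Y : Matrix n n ℂ) : Set (Matrix n n ℂ) :=
  {σ | (T * σ).trace.im = 0 ∧ |(X * σ).trace.re| + |(Y * σ).trace.re| ≤ (T * σ).trace.re}

theorem convex_crossPolytopeCone {n : Type*} [Fintype n] (T X Y : Matrix n n ℂ) :
    Convex ℝ (crossPolytopeCone T X Y) := by
  intro u ⟨hu_im, hu⟩ v ⟨hv_im, hv⟩ a b ha hb _
  have hre (A : Matrix n n ℂ) :
      (A * (a • u + b • v)).trace.re = a * (A * u).trace.re + b * (A * v).trace.re := by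
    simp [Matrix.mul_add, Matrix.mul_smul]
  have him (A : Matrix n n ℂ) :
      (A * (a • u + b • v)).trace.im = a * (A * u).trace.im + b * (A * v).trace.im := by
    simp [Matrix.mul_add, Matrix.mul_smul]
  refine ⟨by rw [him, hu_im, hv_im]; ring, ?_⟩
  rw [hre, hre, hre]
  have hX := abs_add_le (a * (X * u).trace.re) (b * (X * v).trace.re)
  have hY := abs_add_le (a * (Y * u).trace.re) (b * (Y * v).trace.re)
  rw [abs_mul, abs_mul, abs_of_nonneg ha, abs_of_nonneg hb] at hX hY
  linarith [mul_le_mul_of_nonneg_left hu ha, mul_le_mul_of_nonneg_left hv hb]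

theorem IsPureStab2.mem_crossPolytopeCone {τ : Matrix (Fin 2 × Fin 2) (Fin 2 × Fin 2) ℂ}
    (hτ : IsPureStab2 τ) : τ ∈ crossPolytopeCone codeId codeX codeY := by
  obtain ⟨s₁, s₂, p₁, p₂, hphase, htrace, hexp⟩ := hτ.exists_stabilizerExpectation
  obtain ⟨him, hle⟩ := stabilizerExpectation_crossPolytope s₁ s₂ p₁ p₂ hphase htrace
  simp only [crossPolytopeCone, Set.mem_ofPred_eq, codeId, codeX, codeY, add_mul, sub_mul,
    trace_add, trace_sub, hexp, ← map_add, ← map_sub, ← GaussianInt.intCast_re,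
    ← GaussianInt.intCast_im]
  exact ⟨by exact_mod_cast him, by exact_mod_cast hle⟩

theorem IsStab2.mem_crossPolytopeCone {σ : Matrix (Fin 2 × Fin 2) (Fin 2 × Fin 2) ℂ}
    (hσ : IsStab2 σ) : σ ∈ crossPolytopeCone codeId codeX codeY :=
  convexHull_min (fun _ hτ => IsPureStab2.mem_crossPolytopeCone hτ)
    (convex_crossPolytopeCone _ _ _) hσ

theorem mul_add_mul_le_mul_of_abs_add_abs_le {c s x y t : ℝ} (hs : 0 ≤ s) (hsc : s ≤ c)
    (h : |x| + |y| ≤ t) : c * x + s * y ≤ c * t := by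
  have hc : 0 ≤ c := hs.trans hsc
  have hx := mul_le_mul_of_nonneg_left (le_abs_self x) hc
  have hy := mul_le_mul_of_nonneg_left (le_abs_self y) hs
  have hsy := mul_le_mul_of_nonneg_right hsc (abs_nonneg y)
  have ht := mul_le_mul_of_nonneg_left h hc
  linarith

theorem re_trace_Pi0_rhoL_Pi0_mul_div_le {θ : ℝ} (hs : 0 ≤ Real.sin θ)
    (hsc : Real.sin θ ≤ Real.cos θ) {σ : Matrix (Fin 2 × Fin 2) (Fin 2 × Fin 2) ℂ}
    (hσ : IsStab2 σ) (hne : (Pi0 * σ * Pi0).trace ≠ 0) :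
    ((Pi0 * rhoL θ * Pi0 * (Pi0 * σ * Pi0)).trace / (Pi0 * σ * Pi0).trace).re
      ≤ (1 + Real.cos θ) / 2 := by
  obtain ⟨him, hle⟩ := hσ.mem_crossPolytopeCone
  rw [trace_Pi0_mul_mul_Pi0] at hne
  rw [trace_Pi0_rhoL_Pi0_mul_Pi0_mul_Pi0, trace_Pi0_mul_mul_Pi0]
  set t := (codeId * σ).trace
  have ht : t / 2 = ((t.re / 2 : ℝ) : ℂ) := by
    apply Complex.ext <;> simp [him]
  have htpos : 0 < t.re := by
    refine lt_of_le_of_ne ((add_nonneg (abs_nonneg _) (abs_nonneg _)).trans hle) fun h => hne ?_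
    rw [ht, ← h]
    simp
  rw [ht, Complex.div_ofReal_re, div_le_iff₀ (by positivity)]
  simp only [Complex.div_ofNat_re, Complex.add_re, Complex.mul_re, Complex.ofReal_re,
    Complex.ofReal_im, zero_mul, sub_zero]
  linarith [mul_add_mul_le_mul_of_abs_add_abs_le hs hsc hle]

theorem trace_rho1_mul (θ a b c : ℝ) :
    (rho1 θ * ((1 / 2 : ℂ) • (1 + (a : ℂ) • sigmaX + (b : ℂ) • sigmaY + (c : ℂ) • sigmaZ))).trace
      = ((1 + Real.cos θ * a + Real.sin θ * b) / 2 : ℝ) := by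
  rw [rho1, show (1 : Matrix (Fin 2) (Fin 2) ℂ) = pauliMat 0 from rfl,
    show sigmaX = pauliMat 1 from rfl, show sigmaY = pauliMat 2 from rfl,
    show sigmaZ = pauliMat 3 from rfl]
  simp only [mul_add, add_mul, smul_mul_assoc, mul_smul_comm, trace_add, trace_smul,
    trace_pauliMat_mul_pauliMat, smul_eq_mul]
  simp only [Fin.ext_iff, Fin.val_zero, Fin.val_one, Fin.val_two]
  norm_num
  ring

theorem re_trace_rho1_mul_le {θ : ℝ} (hs : 0 ≤ Real.sin θ) (hsc : Real.sin θ ≤ Real.cos θ)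
    {σ : Matrix (Fin 2) (Fin 2) ℂ} (hσ : IsStab1 σ) :
    (rho1 θ * σ).trace.re ≤ (1 + Real.cos θ) / 2 := by
  obtain ⟨a, b, c, habc, rfl⟩ := hσ
  rw [trace_rho1_mul, Complex.ofReal_re]
  have := mul_add_mul_le_mul_of_abs_add_abs_le hs hsc (x := a) (y := b) (t := 1)
    (by linarith [abs_nonneg c])
  linarith

/-- For the `Z`-rotation with `0 ≤ θ ≤ π/4`, the maximal normalized
Choi-block overlap with two-qubit stabilizer states is at most `(1+cosθ)/2`, which
is exactly the maximal overlap of `ρ(θ) = (1/2)(I + cosθ X + sinθ Y)` with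
single-qubit stabilizer states. -/
theorem stabilizer_fidelity_bound (θ : ℝ) (hθ0 : 0 ≤ θ) (hθ1 : θ ≤ Real.pi / 4) :
    (∀ σ : Matrix (Fin 2 × Fin 2) (Fin 2 × Fin 2) ℂ, IsStab2 σ →
      (Pi0 * σ * Pi0).trace ≠ 0 →
      ((Pi0 * rhoL θ * Pi0 * (Pi0 * σ * Pi0)).trace / (Pi0 * σ * Pi0).trace).re
        ≤ (1 + Real.cos θ) / 2)
    ∧ (∃ σ' : Matrix (Fin 2) (Fin 2) ℂ, IsStab1 σ' ∧
        ((rho1 θ * σ').trace).re = (1 + Real.cos θ) / 2 ∧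
        ∀ σ'' : Matrix (Fin 2) (Fin 2) ℂ, IsStab1 σ'' →
          ((rho1 θ * σ'').trace).re ≤ (1 + Real.cos θ) / 2) := by
  have hs : 0 ≤ Real.sin θ := Real.sin_nonneg_of_nonneg_of_le_pi hθ0 (by linarith [Real.pi_pos])
  have hsc : Real.sin θ ≤ Real.cos θ := by
    rw [← Real.sin_pi_div_two_sub]
    exact Real.sin_le_sin_of_le_of_le_pi_div_two (by linarith) (by linarith) (by linarith)
  refine ⟨fun σ hσ hne => re_trace_Pi0_rhoL_Pi0_mul_div_le hs hsc hσ hne,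
    (1 / 2 : ℂ) • (1 + ((1 : ℝ) : ℂ) • sigmaX + ((0 : ℝ) : ℂ) • sigmaY + ((0 : ℝ) : ℂ) • sigmaZ),
    ⟨1, 0, 0, by norm_num, rfl⟩, ?_, fun σ hσ => re_trace_rho1_mul_le hs hsc hσ⟩
  rw [trace_rho1_mul, Complex.ofReal_re]
  ring
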